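/- arXiv:1706.06630 — 3 statements merged into one kernel-verified Lean document; each statement's English description precedes it below -/
import Mathlib

section
/- For every angle β ∈ [β1, β2] ⊆ [0, π/2], the rotation of the vertical strip V = [0,1]×ℝ by angle β about the origin is contained in the butterfly set B(β1, β2). -/
open Real MeasureTheory Set
open scoped ENNReal

noncomputable section

/-- Horizontal strip ℝ × [0,1]. -/
def Hstrip : Set (ℝ × ℝ) := {p | 0 ≤ p.2 ∧ p.2 ≤ 1}

/-- Vertical strip [0,1] × ℝ. -/
def Vstrip : Set (ℝ × ℝ) := {p | 0 ≤ p.1 ∧ p.1 ≤ 1}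

/-- Rotation by θ about the origin. -/
def rot (θ : ℝ) (p : ℝ × ℝ) : ℝ × ℝ :=
  (p.1 * cos θ - p.2 * sin θ, p.1 * sin θ + p.2 * cos θ)

/-- The L-shaped hallway L0 translated by (u,v) then rotated by α about the origin. -/
def Lhall (α u v : ℝ) : Set (ℝ × ℝ) :=
  {p | u ≤ p.1 * cos α + p.2 * sin α ∧ p.1 * cos α + p.2 * sin α ≤ u + 1 ∧
       -p.1 * sin α + p.2 * cos α ≤ v + 1} ∪
  {p | p.1 * cos α + p.2 * sin α ≤ u + 1 ∧ v ≤ -p.1 * sin α + p.2 * cos α ∧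
       -p.1 * sin α + p.2 * cos α ≤ v + 1}

/-- The butterfly set B(β1, β2). -/
def Bfly (β1 β2 : ℝ) : Set (ℝ × ℝ) :=
  {p | 0 ≤ p.1 * cos β1 + p.2 * sin β1 ∧ p.1 * cos β2 + p.2 * sin β2 ≤ 1} ∪
  {p | p.1 * cos β1 + p.2 * sin β1 ≤ 1 ∧ 0 ≤ p.1 * cos β2 + p.2 * sin β2}

/-- λ*(X): supremum of areas of connected components of X. -/
def lamStar (X : Set (ℝ × ℝ)) : ℝ≥0∞ :=
  ⨆ p ∈ X, volume (connectedComponentIn X p)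

/-! The dot products of a rotated point of `Vstrip` with the two normals of the butterfly are
`x cos(β - β1) - y sin(β - β1)` and `x cos(β2 - β) + y sin(β2 - β)`, both angles lying in
`[0, π/2]`. For `y ≥ 0` the first is at most `x ≤ 1` and the second is nonnegative, so the point
lies in the second wing; for `y < 0` the roles swap and it lies in the first wing. -/

lemma rot_inner_eq_sub (β γ : ℝ) (p : ℝ × ℝ) :
    (rot β p).1 * cos γ + (rot β p).2 * sin γ = p.1 * cos (β - γ) - p.2 * sin (β - γ) := by
  simp only [rot, cos_sub, sin_sub]
  ring

lemma rot_inner_eq_sub' (β γ : ℝ) (p : ℝ × ℝ) :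
    (rot β p).1 * cos γ + (rot β p).2 * sin γ = p.1 * cos (γ - β) + p.2 * sin (γ - β) := by
  simp only [rot, cos_sub, sin_sub]
  ring

section QuarterTurn

variable {θ x t : ℝ} (hθ : θ ∈ Icc 0 (π / 2)) (ht : 0 ≤ t)
include hθ ht

lemma mul_cos_add_mul_sin_nonneg (hx : 0 ≤ x) : 0 ≤ x * cos θ + t * sin θ := by
  have hcos := cos_nonneg_of_mem_Icc ⟨by linarith [pi_pos, hθ.1], hθ.2⟩
  have hsin := sin_nonneg_of_nonneg_of_le_pi hθ.1 (by linarith [pi_pos, hθ.2])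
  positivity

lemma mul_cos_sub_mul_sin_le_one (hx₀ : 0 ≤ x) (hx₁ : x ≤ 1) : x * cos θ - t * sin θ ≤ 1 := by
  have hsin := sin_nonneg_of_nonneg_of_le_pi hθ.1 (by linarith [pi_pos, hθ.2])
  have hx_cos : x * cos θ ≤ 1 := by nlinarith [cos_le_one θ]
  nlinarith

end QuarterTurn

theorem stmt1 (β1 β2 β : ℝ) (h1 : 0 ≤ β1) (h2 : β2 ≤ π / 2)
    (hβ : β ∈ Set.Icc β1 β2) :
    rot β '' Vstrip ⊆ Bfly β1 β2 := by
  rintro _ ⟨⟨x, y⟩, ⟨hx₀, hx₁⟩, rfl⟩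
  have ha : β - β1 ∈ Icc 0 (π / 2) := ⟨by linarith [hβ.1], by linarith [hβ.2]⟩
  have hb : β2 - β ∈ Icc 0 (π / 2) := ⟨by linarith [hβ.2], by linarith [hβ.1]⟩
  rw [Bfly, mem_union, mem_ofPred_eq, mem_ofPred_eq, rot_inner_eq_sub β β1, rot_inner_eq_sub' β β2]
  rcases le_or_gt 0 y with hy | hy
  · exact Or.inr ⟨mul_cos_sub_mul_sin_le_one ha hy hx₀ hx₁, mul_cos_add_mul_sin_nonneg hb hy hx₀⟩
  · have hy' : 0 ≤ -y := by linarith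
    refine Or.inl ⟨?_, ?_⟩
    · linarith [mul_cos_add_mul_sin_nonneg ha hy' hx₀]
    · linarith [mul_cos_sub_mul_sin_le_one hb hy' hx₀ hx₁]
end
end

section
/- For a single angle α ∈ (0, π/2), the quantity G_{(α)} = sup over u ∈ ℝ² of the largest area of a connected component of H ∩ L_α(u) satisfies G_{(α)} = sec α + csc α. -/
open Real MeasureTheory Set
open scoped ENNReal

noncomputable section

/-! The hallway meets `Hstrip` inside the union of its two arms cut down to the strip; these are
parallelograms of areas `1 / cos α` and `1 / sin α`, which bounds every component. For
`u = (1 / sin α, 0)` the inner corner `(cot α, 1)` of the hallway lies on the upper edge of the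
strip. Below that edge the arm coordinates `s = x cos α + y sin α`, `t = -x sin α + y cos α`
satisfy `s sin α + t cos α = y ≤ 1`, so each arm stays on its side of the corner: both
parallelograms lie in `Hstrip ∩ L_α(u)`, they are convex, share the corner and overlap only along a
segment, so a single component has the full area. -/

def band (a b s t : ℝ) : Set (ℝ × ℝ) := {p | p.1 * a + p.2 * b ∈ Icc s t}

section Band

variable (a b s t : ℝ)

lemma isLinearMap_band_form : IsLinearMap ℝ fun p : ℝ × ℝ => p.1 * a + p.2 * b :=
  ⟨fun p q => by simp only [Prod.fst_add, Prod.snd_add]; ring,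
   fun c p => by simp only [Prod.smul_fst, Prod.smul_snd, smul_eq_mul]; ring⟩

lemma convex_Hstrip_inter_band : Convex ℝ (Hstrip ∩ band a b s t) :=
  ((convex_Icc 0 1).is_linear_preimage (LinearMap.snd ℝ ℝ ℝ).isLinear).inter
    ((convex_Icc s t).is_linear_preimage (isLinearMap_band_form a b))

lemma measurableSet_Hstrip_inter_band : MeasurableSet (Hstrip ∩ band a b s t) :=
  (measurableSet_Icc.preimage measurable_snd).inter
    (measurableSet_Icc.preimage (by fun_prop))

lemma volume_Hstrip_inter_band (ha : a ≠ 0) :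
    volume (Hstrip ∩ band a b s t) = ENNReal.ofReal ((t - s) / |a|) := by
  have slice : ∀ y : ℝ, volume ((fun x => (x, y)) ⁻¹' (Hstrip ∩ band a b s t)) =
      (Icc 0 1).indicator (fun _ => ENNReal.ofReal ((t - s) / |a|)) y := by
    intro y
    by_cases hy : y ∈ Icc (0 : ℝ) 1
    · have : (fun x => (x, y)) ⁻¹' (Hstrip ∩ band a b s t) =
          (· * a) ⁻¹' ((· + y * b) ⁻¹' Icc s t) := by
        ext x; simp [Hstrip, band, hy.1, hy.2, le_sub_iff_add_le]
      rw [this, Real.volume_preimage_mul_right ha, preimage_add_const_Icc, Real.volume_Icc,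
        indicator_of_mem hy, ← ENNReal.ofReal_mul (abs_nonneg _), abs_inv]
      congr 1
      ring
    · have : (fun x => (x, y)) ⁻¹' (Hstrip ∩ band a b s t) = ∅ := by
        ext x; simp only [mem_Icc] at hy; simp [Hstrip, hy]
      rw [this, measure_empty, indicator_of_notMem hy]
  rw [Measure.volume_eq_prod, Measure.prod_apply_symm (measurableSet_Hstrip_inter_band a b s t)]
  simp_rw [slice]
  rw [lintegral_indicator_const measurableSet_Icc, Real.volume_Icc, sub_zero,
    ENNReal.ofReal_one, mul_one]

end Band

lemma lamStar_le_volume (X : Set (ℝ × ℝ)) : lamStar X ≤ volume X :=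
  iSup₂_le fun p _ => measure_mono (connectedComponentIn_subset X p)

lemma volume_le_lamStar_of_isPreconnected {S X : Set (ℝ × ℝ)} {p : ℝ × ℝ} (hS : IsPreconnected S)
    (hp : p ∈ S) (hSX : S ⊆ X) : volume S ≤ lamStar X :=
  (measure_mono (hS.subset_connectedComponentIn hp hSX)).trans <|
    le_biSup (fun q => volume (connectedComponentIn X q)) (hSX hp)

section Arms

variable {α : ℝ}

lemma volume_Hstrip_inter_band_cos_sin (hc : 0 < cos α) (u : ℝ) :
    volume (Hstrip ∩ band (cos α) (sin α) u (u + 1)) = ENNReal.ofReal (1 / cos α) := by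
  rw [volume_Hstrip_inter_band _ _ _ _ hc.ne', abs_of_pos hc, add_sub_cancel_left]

lemma volume_Hstrip_inter_band_neg_sin_cos (hs : 0 < sin α) (v : ℝ) :
    volume (Hstrip ∩ band (-sin α) (cos α) v (v + 1)) = ENNReal.ofReal (1 / sin α) := by
  rw [volume_Hstrip_inter_band _ _ _ _ (neg_ne_zero.2 hs.ne'), abs_neg, abs_of_pos hs,
    add_sub_cancel_left]

lemma Hstrip_inter_Lhall_subset (α u v : ℝ) :
    Hstrip ∩ Lhall α u v ⊆
      (Hstrip ∩ band (cos α) (sin α) u (u + 1)) ∪ (Hstrip ∩ band (-sin α) (cos α) v (v + 1)) := by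
  rintro p ⟨hH, ⟨h₁, h₂, -⟩ | ⟨-, h₁, h₂⟩⟩
  · exact Or.inl ⟨hH, h₁, h₂⟩
  · exact Or.inr ⟨hH, by constructor <;> linarith⟩

lemma volume_Hstrip_inter_Lhall_le (hc : 0 < cos α) (hs : 0 < sin α) (u v : ℝ) :
    volume (Hstrip ∩ Lhall α u v) ≤ ENNReal.ofReal (1 / cos α + 1 / sin α) :=
  calc volume (Hstrip ∩ Lhall α u v)
      ≤ volume (Hstrip ∩ band (cos α) (sin α) u (u + 1)) +
          volume (Hstrip ∩ band (-sin α) (cos α) v (v + 1)) :=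
        (measure_mono (Hstrip_inter_Lhall_subset α u v)).trans (measure_union_le _ _)
    _ = ENNReal.ofReal (1 / cos α + 1 / sin α) := by
        rw [volume_Hstrip_inter_band_cos_sin hc, volume_Hstrip_inter_band_neg_sin_cos hs,
          ENNReal.ofReal_add (by positivity) (by positivity)]

lemma rotated_fst_mul_sin_add_rotated_snd_mul_cos (α : ℝ) (p : ℝ × ℝ) :
    (p.1 * cos α + p.2 * sin α) * sin α + (p.1 * (-sin α) + p.2 * cos α) * cos α = p.2 := by
  linear_combination p.2 * sin_sq_add_cos_sq α

lemma rotated_snd_nonpos_of_csc_le_rotated_fst (hc : 0 < cos α) (hs : 0 < sin α) {p : ℝ × ℝ}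
    (hy : p.2 ≤ 1) (h : 1 / sin α ≤ p.1 * cos α + p.2 * sin α) :
    p.1 * (-sin α) + p.2 * cos α ≤ 0 := by
  have hsum := rotated_fst_mul_sin_add_rotated_snd_mul_cos α p
  rw [div_le_iff₀ hs] at h
  nlinarith

lemma rotated_fst_le_csc_of_rotated_snd_nonneg (hc : 0 < cos α) (hs : 0 < sin α) {p : ℝ × ℝ}
    (hy : p.2 ≤ 1) (h : 0 ≤ p.1 * (-sin α) + p.2 * cos α) :
    p.1 * cos α + p.2 * sin α ≤ 1 / sin α := by
  have hsum := rotated_fst_mul_sin_add_rotated_snd_mul_cos α p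
  rw [le_div_iff₀ hs]
  nlinarith

lemma Hstrip_inter_band_cos_sin_subset_Lhall (hc : 0 < cos α) (hs : 0 < sin α) :
    Hstrip ∩ band (cos α) (sin α) (1 / sin α) (1 / sin α + 1) ⊆
      Hstrip ∩ Lhall α (1 / sin α) 0 := by
  rintro p ⟨hH, h₁, h₂⟩
  have := rotated_snd_nonpos_of_csc_le_rotated_fst hc hs hH.2 h₁
  exact ⟨hH, Or.inl ⟨h₁, h₂, by linarith⟩⟩

lemma Hstrip_inter_band_neg_sin_cos_subset_Lhall (hc : 0 < cos α) (hs : 0 < sin α) :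
    Hstrip ∩ band (-sin α) (cos α) 0 (0 + 1) ⊆ Hstrip ∩ Lhall α (1 / sin α) 0 := by
  rintro p ⟨hH, h₁, h₂⟩
  have := rotated_fst_le_csc_of_rotated_snd_nonneg hc hs hH.2 h₁
  exact ⟨hH, Or.inr ⟨by linarith, by linarith, by linarith⟩⟩

lemma ofReal_le_lamStar_Hstrip_inter_Lhall (hc : 0 < cos α) (hs : 0 < sin α) :
    ENNReal.ofReal (1 / cos α + 1 / sin α) ≤ lamStar (Hstrip ∩ Lhall α (1 / sin α) 0) := by
  set A := Hstrip ∩ band (cos α) (sin α) (1 / sin α) (1 / sin α + 1)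
  set B := Hstrip ∩ band (-sin α) (cos α) 0 (0 + 1)
  have corner : (cos α / sin α, (1 : ℝ)) ∈ A ∩ B := by
    have h₁ : cos α / sin α * cos α + 1 * sin α = 1 / sin α := by
      field_simp
      linear_combination cos_sq_add_sin_sq α
    have h₂ : cos α / sin α * -sin α + 1 * cos α = 0 := by
      field_simp
      ring
    refine ⟨⟨⟨zero_le_one, le_rfl⟩, ?_⟩, ⟨zero_le_one, le_rfl⟩, ?_⟩
    · simp only [band, mem_ofPred_eq, h₁, mem_Icc]; constructor <;> linarith
    · simp only [band, mem_ofPred_eq, h₂, mem_Icc]; norm_num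
  have hAB : volume (A ∩ B) = 0 := by
    refine measure_mono_null (t := Hstrip ∩ band (cos α) (sin α) (1 / sin α) (1 / sin α)) ?_ ?_
    · rintro p ⟨⟨hH, h₁, -⟩, -, h₂, -⟩
      exact ⟨hH, h₁, rotated_fst_le_csc_of_rotated_snd_nonneg hc hs hH.2 h₂⟩
    · rw [volume_Hstrip_inter_band _ _ _ _ hc.ne', sub_self, zero_div, ENNReal.ofReal_zero]
  calc ENNReal.ofReal (1 / cos α + 1 / sin α)
      = volume A + volume B := by
        rw [volume_Hstrip_inter_band_cos_sin hc, volume_Hstrip_inter_band_neg_sin_cos hs,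
          ENNReal.ofReal_add (by positivity) (by positivity)]
    _ = volume (A ∪ B) :=
        (measure_union₀ (measurableSet_Hstrip_inter_band _ _ _ _).nullMeasurableSet hAB).symm
    _ ≤ lamStar (Hstrip ∩ Lhall α (1 / sin α) 0) :=
        volume_le_lamStar_of_isPreconnected
          (((convex_Hstrip_inter_band _ _ _ _).isPreconnected).union _ corner.1 corner.2
            (convex_Hstrip_inter_band _ _ _ _).isPreconnected)
          (Or.inl corner.1)
          (union_subset (Hstrip_inter_band_cos_sin_subset_Lhall hc hs)
            (Hstrip_inter_band_neg_sin_cos_subset_Lhall hc hs))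

end Arms

theorem stmt6 (α : ℝ) (hα : α ∈ Set.Ioo 0 (π / 2)) :
    (⨆ u : ℝ × ℝ, lamStar (Hstrip ∩ Lhall α u.1 u.2)) =
      ENNReal.ofReal (1 / cos α + 1 / sin α) := by
  have hc : 0 < cos α := cos_pos_of_mem_Ioo ⟨by linarith [hα.1, pi_pos], hα.2⟩
  have hs : 0 < sin α := sin_pos_of_pos_of_lt_pi hα.1 (by linarith [hα.2, pi_pos])
  refine le_antisymm (iSup_le fun u => ?_) ?_
  · exact (lamStar_le_volume _).trans (volume_Hstrip_inter_Lhall_le hc hs u.1 u.2)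
  · exact (ofReal_le_lamStar_Hstrip_inter_Lhall hc hs).trans
      (le_iSup (fun u : ℝ × ℝ => lamStar (Hstrip ∩ Lhall α u.1 u.2)) (1 / sin α, 0))
end
end

section
/- Let S be a bounded measurable subset of ℝ² that is contained, for every t ∈ [0, β], in a translate of the set R_t(L0), where L0 = ((-∞,1]×[0,1]) ∪ ([0,1]×(-∞,1]) and R_t is rotation by t about the origin. Then for any finite sequence 0 < α1 < … < αk ≤ β, the area of S is at most sup over u1,…,uk ∈ ℝ² of λ(H ∩ ⋂_{j=1}^k L_{αj}(uj)), where H = ℝ×[0,1], provided S ⊆ H. -/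
open Real MeasureTheory Set
open scoped ENNReal

noncomputable section

theorem stmt8_general (S : Set (ℝ × ℝ))
    (hSH : S ⊆ Hstrip) (β : ℝ)
    (hfit : ∀ t ∈ Set.Icc 0 β, ∃ u v : ℝ, S ⊆ Lhall t u v)
    (k : ℕ) (α : Fin k → ℝ)
    (hpos : ∀ j, 0 < α j) (hle : ∀ j, α j ≤ β) :
    volume S ≤
      ⨆ u : Fin k → ℝ × ℝ,
        volume (Hstrip ∩ ⋂ j, Lhall (α j) (u j).1 (u j).2) := by
  choose u v hS using fun j => hfit (α j) ⟨(hpos j).le, hle j⟩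
  exact le_iSup_of_le (fun j => (u j, v j)) (measure_mono (subset_inter hSH (subset_iInter hS)))

theorem stmt8 (S : Set (ℝ × ℝ)) (hSb : Bornology.IsBounded S) (hSm : MeasurableSet S)
    (hSH : S ⊆ Hstrip) (β : ℝ)
    (hfit : ∀ t ∈ Set.Icc 0 β, ∃ u v : ℝ, S ⊆ Lhall t u v)
    (k : ℕ) (α : Fin k → ℝ) (hmono : StrictMono α)
    (hpos : ∀ j, 0 < α j) (hle : ∀ j, α j ≤ β) :
    volume S ≤
      ⨆ u : Fin k → ℝ × ℝ,
        volume (Hstrip ∩ ⋂ j, Lhall (α j) (u j).1 (u j).2) :=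
  stmt8_general S hSH β hfit k α hpos hle
end
end
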